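/- arXiv:1401.6953 — 2 statements merged into one kernel-verified Lean document; each statement's English description precedes it below -/
import Mathlib

section
/- Let δ > −1/2 and let u : ℝ³ → ℝ be a smooth function such that ⟨x⟩^{δ+1} |∇u| ∈ L²(ℝ³) and ⟨x⟩^{δ+2} ∂^α u ∈ L²(ℝ³) for every multi-index α with |α| = 2. Then Δu is integrable on ℝ³ and ∫_{ℝ³} Δu(x) dx = 0. -/
open MeasureTheory Real Filter Metric
open scoped Topology ContDiff

noncomputable section

/-- Euclidean 3-space `ℝ³`. -/
abbrev E3 := EuclideanSpace ℝ (Fin 3)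

/-- Partial derivative in the `i`-th coordinate direction. -/
def pd (i : Fin 3) (f : E3 → ℝ) : E3 → ℝ := fun x => fderiv ℝ f x (EuclideanSpace.single i 1)

/-- The partial derivative `∂^m` corresponding to the multi-index `m`. -/
def pdm (m : Fin 3 → ℕ) (f : E3 → ℝ) : E3 → ℝ :=
  (pd 0)^[m 0] <| (pd 1)^[m 1] <| (pd 2)^[m 2] f

/-- The order `|m|` of a multi-index `m`. -/
def mdeg (m : Fin 3 → ℕ) : ℕ := m 0 + m 1 + m 2

/-- The Laplacian on `ℝ³`. -/
def lap (f : E3 → ℝ) : E3 → ℝ := fun x => ∑ i, pd i (pd i f) x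

/-- The weight `⟨x⟩ = (1 + |x|²)^(1/2)`. -/
def jw (x : E3) : ℝ := Real.sqrt (1 + ‖x‖ ^ 2)

/-! ### Smoothness-index helpers -/

lemma one_le_inf : (1 : WithTop ℕ∞) ≤ ∞ := by exact_mod_cast le_top

lemma inf_succ_le : (∞ : WithTop ℕ∞) + 1 ≤ ∞ := le_of_eq rfl

/-! ### Basic facts about the weight `jw` -/

lemma jw_pos (x : E3) : 0 < jw x := Real.sqrt_pos.2 (by positivity)

lemma one_le_jw (x : E3) : 1 ≤ jw x := by
  calc (1:ℝ) = Real.sqrt 1 := Real.sqrt_one.symm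
    _ ≤ jw x := Real.sqrt_le_sqrt (by nlinarith [sq_nonneg ‖x‖])

lemma norm_le_jw (x : E3) : ‖x‖ ≤ jw x := by
  have h := Real.sqrt_le_sqrt (show ‖x‖ ^ 2 ≤ 1 + ‖x‖ ^ 2 by linarith)
  rwa [Real.sqrt_sq (norm_nonneg x)] at h

lemma continuous_jw : Continuous jw :=
  Real.continuous_sqrt.comp (continuous_const.add (continuous_norm.pow 2))

lemma continuous_jw_rpow (r : ℝ) : Continuous fun x : E3 => jw x ^ r :=
  continuous_jw.rpow_const fun x => Or.inl (jw_pos x).ne'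

lemma jw_rpow_cancel (x : E3) (r t : ℝ) : jw x ^ (-r) * (jw x ^ r * t) = t := by
  rw [← mul_assoc, ← Real.rpow_add (jw_pos x)]
  simp

lemma rpow_neg_anti {a b t : ℝ} (ha : 0 < a) (hab : a ≤ b) (ht : 0 ≤ t) :
    b ^ (-t) ≤ a ^ (-t) := by
  rw [Real.rpow_neg ha.le, Real.rpow_neg (ha.trans_le hab).le]
  have h1 : 0 < a ^ t := Real.rpow_pos_of_pos ha t
  have h2 : a ^ t ≤ b ^ t := Real.rpow_le_rpow ha.le hab ht
  exact inv_anti₀ h1 h2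

/-! ### L² facts -/

lemma integrable_mul_L2 {f g : E3 → ℝ} (hf : MemLp f 2 volume) (hg : MemLp g 2 volume) :
    Integrable (fun x => f x * g x) volume := by
  have h : Integrable (fun x => f x ^ 2 + g x ^ 2) volume :=
    hf.integrable_sq.add hg.integrable_sq
  refine h.mono' (hf.aestronglyMeasurable.mul hg.aestronglyMeasurable) (ae_of_all _ fun x => ?_)
  rw [Real.norm_eq_abs, abs_mul]
  nlinarith [sq_nonneg (|f x| - |g x|), sq_abs (f x), sq_abs (g x), abs_nonneg (f x),
    abs_nonneg (g x)]

lemma memL2_jw_neg {s : ℝ} (hs : 3 < 2 * s) : MemLp (fun x : E3 => jw x ^ (-s)) 2 volume := by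
  have hs0 : (0:ℝ) ≤ s := by linarith
  have hcont := continuous_jw_rpow (-s)
  rw [memLp_two_iff_integrable_sq hcont.aestronglyMeasurable]
  have h3 : ((Module.finrank ℝ E3 : ℝ)) < 2 * s := by
    rw [finrank_euclideanSpace_fin]; exact_mod_cast hs
  have hint : Integrable (fun x : E3 => (2:ℝ) ^ (2*s) * (1 + ‖x‖) ^ (-(2*s))) volume :=
    (integrable_one_add_norm h3).const_mul _
  refine hint.mono' ((hcont.pow 2).aestronglyMeasurable) (ae_of_all _ fun x => ?_)
  have h1 : (jw x ^ (-s)) ^ 2 = jw x ^ (-(2*s)) := by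
    rw [← Real.rpow_two, ← Real.rpow_mul (jw_pos x).le]
    ring_nf
  have h2 : (1 + ‖x‖) / 2 ≤ jw x := by
    have := one_le_jw x; have := norm_le_jw x; linarith
  have h3' : jw x ^ (-(2*s)) ≤ ((1 + ‖x‖)/2) ^ (-(2*s)) :=
    rpow_neg_anti (by positivity) h2 (by linarith)
  have h4 : ((1 + ‖x‖)/2) ^ (-(2*s)) = (2:ℝ) ^ (2*s) * (1 + ‖x‖) ^ (-(2*s)) := by
    rw [Real.div_rpow (by positivity) (by norm_num), div_eq_mul_inv,
      ← Real.rpow_neg (by norm_num : (0:ℝ) ≤ 2), neg_neg, mul_comm]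
  rw [Real.norm_eq_abs, abs_of_nonneg (by positivity), h1, ← h4]
  exact h3'

lemma setIntegral_le_L2 {q : E3 → ℝ} (hq : MemLp q 2 volume) (h0 : ∀ x, 0 ≤ q x) {s : Set E3}
    (hfin : volume s < ⊤) :
    ∫ x in s, q x ≤ (∫ x, q x ^ 2) ^ (1/2 : ℝ) * ((volume s).toReal) ^ (1/2 : ℝ) := by
  haveI : IsFiniteMeasure (volume.restrict s) := ⟨by rwa [Measure.restrict_apply_univ]⟩
  have hconj : Real.HolderConjugate 2 2 := Real.HolderConjugate.two_two
  have hq2 : MemLp q (ENNReal.ofReal 2) (volume.restrict s) := by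
    rw [show ENNReal.ofReal 2 = 2 by simp]; exact hq.restrict s
  have h1 : MemLp (fun _ : E3 => (1:ℝ)) (ENNReal.ofReal 2) (volume.restrict s) := by
    rw [show ENNReal.ofReal 2 = 2 by simp]; exact memLp_const 1
  have key := integral_mul_le_Lp_mul_Lq_of_nonneg hconj (ae_of_all _ h0)
    (ae_of_all _ fun _ => zero_le_one) hq2 h1
  have e1 : ∫ a in s, q a * 1 = ∫ a in s, q a := by simp
  have e2 : ∫ a in s, q a ^ (2:ℝ) = ∫ a in s, q a ^ 2 := by
    apply integral_congr_ae (ae_of_all _ fun a => ?_)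
    exact Real.rpow_two (q a)
  have e3 : ∫ _a in s, (1:ℝ) ^ (2:ℝ) = (volume s).toReal := by
    simp [Real.one_rpow, Measure.restrict_apply_univ, Measure.real]
  rw [e1, e2, e3] at key
  have hsq : ∫ x in s, q x ^ 2 ≤ ∫ x, q x ^ 2 :=
    setIntegral_le_integral hq.integrable_sq (ae_of_all _ fun x => sq_nonneg _)
  calc ∫ x in s, q x ≤ (∫ x in s, q x ^ 2) ^ (1/2:ℝ) * ((volume s).toReal) ^ (1/2:ℝ) := key
    _ ≤ (∫ x, q x ^ 2) ^ (1/2:ℝ) * ((volume s).toReal) ^ (1/2:ℝ) := by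
        apply mul_le_mul_of_nonneg_right _ (Real.rpow_nonneg ENNReal.toReal_nonneg _)
        exact Real.rpow_le_rpow (integral_nonneg fun x => sq_nonneg _) hsq (by norm_num)

/-! ### Smoothness helpers -/

lemma contDiff_pd (i : Fin 3) {f : E3 → ℝ} (hf : ContDiff ℝ ∞ f) : ContDiff ℝ ∞ (pd i f) :=
  (hf.fderiv_right inf_succ_le).clm_apply contDiff_const

lemma continuous_fderiv_apply {f : E3 → ℝ} (hf : ContDiff ℝ ∞ f) (v : E3) :
    Continuous fun x => fderiv ℝ f x v :=
  ((hf.fderiv_right inf_succ_le).clm_apply contDiff_const).continuous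

/-! ### The cutoff function -/

/-- A bump function on `ℝ³` equal to 1 on the unit ball and supported in the ball of radius 2. -/
def bφ : ContDiffBump (0 : E3) := ⟨1, 2, one_pos, one_lt_two⟩

/-- Rescaled cutoff: equal to 1 on the ball of radius `R`, supported in radius `2R`. -/
def χ (R : ℝ) (x : E3) : ℝ := bφ (R⁻¹ • x)

lemma bφ_contDiff : ContDiff ℝ ∞ (⇑bφ) := bφ.contDiff (n := (⊤ : ℕ∞))

lemma χ_contDiff (R : ℝ) : ContDiff ℝ ∞ (χ R) :=
  bφ_contDiff.comp (contDiff_const_smul R⁻¹)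

lemma χ_nonneg (R : ℝ) (x : E3) : 0 ≤ χ R x := bφ.nonneg

lemma χ_le_one (R : ℝ) (x : E3) : χ R x ≤ 1 := bφ.le_one

lemma χ_eq_one {R : ℝ} (hR : 0 < R) {x : E3} (hx : ‖x‖ ≤ R) : χ R x = 1 := by
  apply bφ.one_of_mem_closedBall
  rw [mem_closedBall, dist_zero_right, norm_smul, norm_inv, Real.norm_eq_abs, abs_of_pos hR]
  calc R⁻¹ * ‖x‖ ≤ R⁻¹ * R := mul_le_mul_of_nonneg_left hx (inv_nonneg.2 hR.le)
    _ = 1 := inv_mul_cancel₀ hR.ne'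
    _ = bφ.rIn := rfl

lemma χ_eq_zero {R : ℝ} (hR : 0 < R) {x : E3} (hx : 2 * R ≤ ‖x‖) : χ R x = 0 := by
  apply bφ.zero_of_le_dist
  rw [dist_zero_right, norm_smul, norm_inv, Real.norm_eq_abs, abs_of_pos hR]
  calc bφ.rOut = (2:ℝ) := rfl
    _ = R⁻¹ * (2 * R) := by
        rw [mul_comm 2 R, ← mul_assoc, inv_mul_cancel₀ hR.ne', one_mul]
    _ ≤ R⁻¹ * ‖x‖ := mul_le_mul_of_nonneg_left hx (inv_nonneg.2 hR.le)

lemma χ_hcs {R : ℝ} (hR : 0 < R) : HasCompactSupport (χ R) := by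
  apply HasCompactSupport.intro (isCompact_closedBall (0:E3) (2*R))
  intro x hx
  apply χ_eq_zero hR
  have : 2 * R < ‖x‖ := by simpa [mem_closedBall, dist_zero_right, not_le] using hx
  exact this.le

lemma χ_fderiv {R : ℝ} (hR : 0 < R) (x : E3) :
    fderiv ℝ (χ R) x
      = (fderiv ℝ (⇑bφ) (R⁻¹ • x)).comp (R⁻¹ • ContinuousLinearMap.id ℝ E3) := by
  have h2 : HasFDerivAt (fun y : E3 => R⁻¹ • y) (R⁻¹ • ContinuousLinearMap.id ℝ E3) x :=
    (hasFDerivAt_id x).const_smul R⁻¹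
  have h1 : HasFDerivAt (⇑bφ) (fderiv ℝ (⇑bφ) (R⁻¹ • x)) (R⁻¹ • x) :=
    (bφ_contDiff.differentiable (by simp) (R⁻¹ • x)).hasFDerivAt
  exact (h1.comp x h2).fderiv

lemma χ_fderiv_norm_le {C R : ℝ} (hC : ∀ y, ‖fderiv ℝ (⇑bφ) y‖ ≤ C) (hR : 0 < R) (x : E3) :
    ‖fderiv ℝ (χ R) x‖ ≤ C * R⁻¹ := by
  have hC0 : 0 ≤ C := le_trans (norm_nonneg _) (hC 0)
  rw [χ_fderiv hR]
  calc ‖(fderiv ℝ (⇑bφ) (R⁻¹ • x)).comp (R⁻¹ • ContinuousLinearMap.id ℝ E3)‖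
      ≤ ‖fderiv ℝ (⇑bφ) (R⁻¹ • x)‖ * ‖R⁻¹ • ContinuousLinearMap.id ℝ E3‖ :=
        ContinuousLinearMap.opNorm_comp_le _ _
    _ ≤ C * R⁻¹ := by
        apply mul_le_mul (hC _) ?_ (norm_nonneg _) hC0
        refine le_trans (ContinuousLinearMap.opNorm_smul_le _ _) ?_
        rw [Real.norm_eq_abs, abs_of_pos (inv_pos.2 hR)]
        calc R⁻¹ * ‖ContinuousLinearMap.id ℝ E3‖ ≤ R⁻¹ * 1 :=
              mul_le_mul_of_nonneg_left ContinuousLinearMap.norm_id_le (inv_nonneg.2 hR.le)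
          _ = R⁻¹ := mul_one _

lemma χ_fderiv_zero_of_lt {R : ℝ} (hR : 0 < R) {x : E3} (hx : ‖x‖ < R) :
    fderiv ℝ (χ R) x = 0 := by
  have hmem : Metric.ball (0:E3) R ∈ 𝓝 x := by
    apply (Metric.isOpen_ball).mem_nhds
    simpa [mem_ball, dist_zero_right] using hx
  have h : χ R =ᶠ[𝓝 x] fun _ => (1:ℝ) := by
    filter_upwards [hmem] with y hy
    exact χ_eq_one hR (le_of_lt (by simpa [mem_ball, dist_zero_right] using hy))
  rw [h.fderiv_eq]
  exact fderiv_const_apply 1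

lemma χ_fderiv_zero_of_gt {R : ℝ} (hR : 0 < R) {x : E3} (hx : 2 * R < ‖x‖) :
    fderiv ℝ (χ R) x = 0 := by
  have hopen : IsOpen {y : E3 | 2 * R < ‖y‖} := isOpen_lt continuous_const continuous_norm
  have hmem : {y : E3 | 2 * R < ‖y‖} ∈ 𝓝 x := hopen.mem_nhds hx
  have h : χ R =ᶠ[𝓝 x] fun _ => (0:ℝ) := by
    filter_upwards [hmem] with y hy
    exact χ_eq_zero hR (le_of_lt hy)
  rw [h.fderiv_eq]
  exact fderiv_const_apply 0

/-! ### The main theorem -/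

/-- Vanishing-flux identity: if δ > −1/2, u is smooth,
`⟨x⟩^{δ+1}|∇u| ∈ L²` and `⟨x⟩^{δ+2} ∂^α u ∈ L²` for all |α| = 2, then Δu is integrable
and has zero average. -/
theorem laplacian_zero_average (δ : ℝ) (hδ : -1 / 2 < δ) (u : E3 → ℝ) (hu : ContDiff ℝ (⊤ : ℕ∞) u)
    (hgrad : MemLp (fun x => jw x ^ (δ + 1) * ‖fderiv ℝ u x‖) 2 volume)
    (hsec : ∀ m : Fin 3 → ℕ, mdeg m = 2 →
      MemLp (fun x => jw x ^ (δ + 2) * pdm m u x) 2 volume) :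
    Integrable (lap u) volume ∧ ∫ x, lap u x = 0 := by
  -- continuity of derivatives
  have hu' : ContDiff ℝ ∞ u := hu.of_le (by simp)
  have hpdu : ∀ i : Fin 3, ContDiff ℝ ∞ (pd i u) := fun i => contDiff_pd i hu'
  have hpd2 : ∀ i : Fin 3, Continuous (pd i (pd i u)) :=
    fun i => (contDiff_pd i (hpdu i)).continuous
  have hlapc : Continuous (lap u) := continuous_finset_sum _ fun i _ => hpd2 i
  -- second derivatives are in weighted L²
  have hsec' : ∀ i : Fin 3, MemLp (fun x => jw x ^ (δ + 2) * pd i (pd i u) x) 2 volume := by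
    intro i
    fin_cases i
    · exact hsec ![2,0,0] rfl
    · exact hsec ![0,2,0] rfl
    · exact hsec ![0,0,2] rfl
  -- each second derivative is integrable
  have hδ2 : (3:ℝ) < 2 * (δ + 2) := by linarith
  have hjwneg := memL2_jw_neg hδ2
  have hint2 : ∀ i : Fin 3, Integrable (fun x => pd i (pd i u) x) volume := by
    intro i
    have h := integrable_mul_L2 hjwneg (hsec' i)
    refine h.congr (ae_of_all _ fun x => ?_)
    exact jw_rpow_cancel x (δ + 2) _
  have hlap : Integrable (lap u) volume := by
    have h := integrable_finset_sum (μ := volume) Finset.univ fun (i : Fin 3) _ => hint2 i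
    exact h.congr (ae_of_all _ fun x => rfl)
  refine ⟨hlap, ?_⟩
  -- the cutoff gradient bound
  obtain ⟨C, hC⟩ := (bφ.hasCompactSupport.fderiv ℝ ).exists_bound_of_continuous
    ((bφ_contDiff.fderiv_right inf_succ_le).continuous)
  have hC0 : 0 ≤ C := le_trans (norm_nonneg _) (hC 0)
  -- abbreviations
  set q : E3 → ℝ := fun x => jw x ^ (δ + 1) * ‖fderiv ℝ u x‖ with hq_def
  have hq0 : ∀ x, 0 ≤ q x := fun x => mul_nonneg (Real.rpow_nonneg (jw_pos x).le _) (norm_nonneg _)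
  set A : ℝ := (∫ x, q x ^ 2) ^ (1/2 : ℝ) with hA_def
  have hA0 : 0 ≤ A := Real.rpow_nonneg (integral_nonneg fun x => sq_nonneg _) _
  set c : ℝ := ((volume : Measure E3) (Metric.ball 0 1)).toReal with hc_def
  have hc0 : 0 ≤ c := ENNReal.toReal_nonneg
  set K : ℝ := C * (A * (8 * c) ^ (1/2:ℝ)) with hK_def
  have hK0 : 0 ≤ K := by positivity
  -- integration by parts identity
  have hibp : ∀ R : ℝ, 0 < R →
      ∫ x, χ R x * lap u x
        = -∑ i : Fin 3, ∫ x, fderiv ℝ (χ R) x (EuclideanSpace.single i 1) * pd i u x := by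
    intro R hR
    have hcont : Continuous (χ R) := (χ_contDiff R).continuous
    have hfcont : ∀ v : E3, Continuous fun x => fderiv ℝ (χ R) x v :=
      fun v => continuous_fderiv_apply (χ_contDiff R) v
    have hint_a : ∀ i : Fin 3, Integrable (fun x => χ R x * pd i (pd i u) x) volume :=
      fun i => (hcont.mul (hpd2 i)).integrable_of_hasCompactSupport ((χ_hcs hR).mul_right)
    have step1 : ∫ x, χ R x * lap u x = ∑ i : Fin 3, ∫ x, χ R x * pd i (pd i u) x := by
      rw [← integral_finset_sum Finset.univ fun i _ => hint_a i]
      congr 1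
      funext x
      simp [lap, Finset.mul_sum]
    rw [step1, ← Finset.sum_neg_distrib]
    apply Finset.sum_congr rfl
    intro i _
    exact integral_mul_fderiv_eq_neg_fderiv_mul_of_integrable
      (((hfcont _).mul (hpdu i).continuous).integrable_of_hasCompactSupport
        (((χ_hcs hR).fderiv_apply ℝ _).mul_right))
      (hint_a i)
      ((hcont.mul (hpdu i).continuous).integrable_of_hasCompactSupport ((χ_hcs hR).mul_right))
      (fun x _ => (χ_contDiff R).differentiable (by simp) x)
      (fun x _ => (hpdu i).differentiable (by simp) x)
  -- limit of the left-hand side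
  have hLHS : Tendsto (fun R : ℝ => ∫ x, χ R x * lap u x) atTop (𝓝 (∫ x, lap u x)) := by
    apply tendsto_integral_filter_of_dominated_convergence (fun x => |lap u x|)
    · filter_upwards with R
      exact ((χ_contDiff R).continuous.mul hlapc).aestronglyMeasurable
    · filter_upwards with R
      filter_upwards with x
      rw [Real.norm_eq_abs, abs_mul]
      calc |χ R x| * |lap u x| ≤ 1 * |lap u x| := by
            have h1 : |χ R x| ≤ 1 := by
              rw [abs_of_nonneg (χ_nonneg R x)]; exact χ_le_one R x
            exact mul_le_mul_of_nonneg_right h1 (abs_nonneg _)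
        _ = |lap u x| := one_mul _
    · exact hlap.abs
    · filter_upwards with x
      apply Tendsto.congr' _ tendsto_const_nhds
      filter_upwards [eventually_ge_atTop (max ‖x‖ 1)] with R hR
      have hR1 : (1:ℝ) ≤ R := le_trans (le_max_right _ _) hR
      rw [χ_eq_one (by linarith) (le_trans (le_max_left _ _) hR), one_mul]
  -- bound on the right-hand side terms
  have hbound : ∀ (i : Fin 3) (R : ℝ), 1 ≤ R →
      |∫ x, fderiv ℝ (χ R) x (EuclideanSpace.single i 1) * pd i u x|
        ≤ K * R ^ (-(δ + 1/2)) := by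
    intro i R hR1
    have hR : 0 < R := lt_of_lt_of_le one_pos hR1
    set v : E3 := EuclideanSpace.single i 1 with hv_def
    have hvnorm : ‖v‖ = 1 := by rw [hv_def, EuclideanSpace.norm_single, norm_one]
    set s : Set E3 := Metric.closedBall 0 (2*R) with hs_def
    have hsfin : volume s < ⊤ := measure_closedBall_lt_top
    have hconst0 : 0 ≤ C * R⁻¹ * R ^ (-(δ+1)) := by positivity
    set g : E3 → ℝ := s.indicator fun x => (C * R⁻¹ * R ^ (-(δ+1))) * q x with hg_def
    have hg0 : ∀ x, 0 ≤ g x := fun x =>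
      Set.indicator_nonneg (fun y _ => mul_nonneg hconst0 (hq0 y)) x
    have hqOn : IntegrableOn q s volume := by
      haveI : IsFiniteMeasure (volume.restrict s) := ⟨by rwa [Measure.restrict_apply_univ]⟩
      have h2 : Integrable (fun x => q x ^ 2 + 1) (volume.restrict s) :=
        (hgrad.integrable_sq.restrict (s := s)).add (integrable_const 1)
      refine h2.mono' hgrad.aestronglyMeasurable.restrict (ae_of_all _ fun x => ?_)
      rw [Real.norm_eq_abs, abs_of_nonneg (hq0 x)]
      nlinarith [sq_nonneg (q x - 1)]
    have hgint : Integrable g volume :=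
      IntegrableOn.integrable_indicator (hqOn.const_mul _) measurableSet_closedBall
    -- pointwise bound
    have hpt : ∀ x, |fderiv ℝ (χ R) x v * pd i u x| ≤ g x := by
      intro x
      by_cases h1 : ‖x‖ < R
      · rw [χ_fderiv_zero_of_lt hR h1]
        simpa using hg0 x
      · by_cases h2 : 2*R < ‖x‖
        · rw [χ_fderiv_zero_of_gt hR h2]
          simpa using hg0 x
        · push_neg at h1 h2
          have hxs : x ∈ s := by
            rw [hs_def]; simpa [mem_closedBall, dist_zero_right] using h2
          have hgx : g x = (C * R⁻¹ * R ^ (-(δ+1))) * q x := Set.indicator_of_mem hxs _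
          have hb1 : |fderiv ℝ (χ R) x v| ≤ C * R⁻¹ := by
            calc |fderiv ℝ (χ R) x v| ≤ ‖fderiv ℝ (χ R) x‖ * ‖v‖ :=
                  (fderiv ℝ (χ R) x).le_opNorm v
              _ = ‖fderiv ℝ (χ R) x‖ := by rw [hvnorm, mul_one]
              _ ≤ C * R⁻¹ := χ_fderiv_norm_le hC hR x
          have hb2 : |pd i u x| ≤ R ^ (-(δ+1)) * q x := by
            have hj : ‖fderiv ℝ u x‖ = jw x ^ (-(δ+1)) * q x := by
              rw [hq_def]; exact (jw_rpow_cancel x (δ+1) _).symm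
            have hRjw : R ≤ jw x := le_trans h1 (norm_le_jw x)
            have hmon : jw x ^ (-(δ+1)) ≤ R ^ (-(δ+1)) :=
              rpow_neg_anti hR hRjw (by linarith)
            calc |pd i u x| ≤ ‖fderiv ℝ u x‖ * ‖v‖ := (fderiv ℝ u x).le_opNorm v
              _ = jw x ^ (-(δ+1)) * q x := by rw [hvnorm, mul_one, hj]
              _ ≤ R ^ (-(δ+1)) * q x := mul_le_mul_of_nonneg_right hmon (hq0 x)
          calc |fderiv ℝ (χ R) x v * pd i u x| = |fderiv ℝ (χ R) x v| * |pd i u x| :=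
                abs_mul _ _
            _ ≤ (C * R⁻¹) * (R ^ (-(δ+1)) * q x) :=
                mul_le_mul hb1 hb2 (abs_nonneg _) (by positivity)
            _ = (C * R⁻¹ * R ^ (-(δ+1))) * q x := by ring
            _ = g x := hgx.symm
    -- the volume of the ball
    have hvol : ((volume : Measure E3) s).toReal = (2*R)^3 * c := by
      rw [hs_def, Measure.addHaar_closedBall volume 0 (by positivity : (0:ℝ) ≤ 2*R),
        finrank_euclideanSpace_fin, ENNReal.toReal_mul,
        ENNReal.toReal_ofReal (by positivity), hc_def]
    -- exponent arithmetic
    have hmul : R⁻¹ * R ^ (-(δ+1)) * R ^ ((3:ℝ)*(1/2)) = R ^ (-(δ+1/2)) := by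
      rw [← Real.rpow_neg_one R, ← Real.rpow_add hR, ← Real.rpow_add hR]
      congr 1
      ring
    have hcube : (((2*R)^3 * c) : ℝ) ^ (1/2:ℝ)
        = (8*c) ^ (1/2:ℝ) * R ^ ((3:ℝ)*(1/2)) := by
      have h8 : ((2*R)^3 * c : ℝ) = (8*c) * R^(3:ℕ) := by ring
      rw [h8, Real.mul_rpow (by positivity) (by positivity),
        ← Real.rpow_natCast R 3, ← Real.rpow_mul hR.le]
      norm_num
    calc |∫ x, fderiv ℝ (χ R) x v * pd i u x|
        ≤ ∫ x, |fderiv ℝ (χ R) x v * pd i u x| := by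
          simpa only [Real.norm_eq_abs] using
            norm_integral_le_integral_norm (μ := volume)
              (fun x => fderiv ℝ (χ R) x v * pd i u x)
      _ ≤ ∫ x, g x :=
          integral_mono_of_nonneg (ae_of_all _ fun x => abs_nonneg _) hgint
            (ae_of_all _ hpt)
      _ = (C * R⁻¹ * R ^ (-(δ+1))) * ∫ x in s, q x := by
          rw [hg_def, integral_indicator measurableSet_closedBall, integral_const_mul]
      _ ≤ (C * R⁻¹ * R ^ (-(δ+1))) * (A * ((volume s).toReal) ^ (1/2:ℝ)) := by
          apply mul_le_mul_of_nonneg_left _ hconst0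
          rw [hA_def]
          exact setIntegral_le_L2 hgrad hq0 hsfin
      _ = K * R ^ (-(δ+1/2)) := by
          rw [hvol, hcube, hK_def, ← hmul]
          ring
  -- the right-hand side tends to zero
  have hRHS : Tendsto (fun R : ℝ =>
      -∑ i : Fin 3, ∫ x, fderiv ℝ (χ R) x (EuclideanSpace.single i 1) * pd i u x)
      atTop (𝓝 0) := by
    apply squeeze_zero_norm' (a := fun R : ℝ => 3 * (K * R ^ (-(δ+1/2))))
    · filter_upwards [eventually_ge_atTop (1:ℝ)] with R hR1
      calc ‖-∑ i : Fin 3, ∫ x, fderiv ℝ (χ R) x (EuclideanSpace.single i 1) * pd i u x‖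
          ≤ ∑ i : Fin 3, ‖∫ x, fderiv ℝ (χ R) x (EuclideanSpace.single i 1) * pd i u x‖ := by
            rw [norm_neg]; exact norm_sum_le _ _
        _ ≤ ∑ _i : Fin 3, K * R ^ (-(δ+1/2)) :=
            Finset.sum_le_sum fun i _ => by
              simpa [Real.norm_eq_abs] using hbound i R hR1
        _ = 3 * (K * R ^ (-(δ+1/2))) := by
            simp [Finset.sum_const, Finset.card_univ]
    · have h := (tendsto_rpow_neg_atTop (show 0 < δ + 1/2 by linarith)).const_mul (3 * K)
      simp only [mul_zero] at h
      apply h.congr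
      intro R
      ring
  -- conclusion
  have hI0 : Tendsto (fun R : ℝ => ∫ x, χ R x * lap u x) atTop (𝓝 0) := by
    apply hRHS.congr'
    filter_upwards [eventually_gt_atTop (0:ℝ)] with R hR
    exact (hibp R hR).symm
  exact tendsto_nhds_unique hLHS hI0
end
end

section
/- Let α, γ ∈ ℝ with γ ≠ 0 and 1 + αγ > 0, let χ : [0,∞) → ℝ be a smooth function with χ ≡ 0 on [0, r₀] for some r₀ > 0 and χ ≡ 1 on [2,∞), and set P(x) := χ(|x|)/|x| (with P(0) := 0). Suppose s and φ are real-valued Schwartz functions on ℝ³, g : ℝ³ → ℝ is integrable, and c ∈ ℝ satisfies (αγ + α/γ)Δs(x) + (1+αγ)Δφ(x) + c(1+αγ)ΔP(x) = −g(x) for all x ∈ ℝ³. Then c = (∫_{ℝ³} g(x) dx) / (4π(1+αγ)). -/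
open MeasureTheory Real Filter

noncomputable section

open Set
open scoped ContDiff

/-! ### Auxiliary lemmas -/

section Schwartz

lemma pd_schwartz (i : Fin 3) (s : SchwartzMap E3 ℝ) :
    pd i ⇑s = ⇑(LineDeriv.lineDerivOpCLM ℝ (SchwartzMap E3 ℝ) (EuclideanSpace.single i (1:ℝ) : E3) s) := by
  funext x; simp [pd, LineDeriv.lineDerivOpCLM_apply, SchwartzMap.lineDerivOp_apply_eq_fderiv]

lemma integral_pd_schwartz (i : Fin 3) (s : SchwartzMap E3 ℝ) :
    ∫ x, pd i (⇑s) x = 0 := by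
  have h := integral_mul_fderiv_eq_neg_fderiv_mul_of_integrable
    (μ := (volume : Measure E3)) (f := fun _ : E3 => (1:ℝ)) (g := ⇑s)
    (v := EuclideanSpace.single i 1) ?_ ?_ ?_ (fun x _ => differentiableAt_const _) (fun x _ => s.differentiableAt)
  · simpa [pd, fderiv_fun_const] using h
  · simp [fderiv_fun_const]
  · have hi : Integrable (pd i ⇑s) volume := by
      rw [pd_schwartz i s]
      exact (LineDeriv.lineDerivOpCLM ℝ (SchwartzMap E3 ℝ) (EuclideanSpace.single i (1:ℝ) : E3) s).integrable
    simp only [one_mul]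
    exact hi
  · simpa using s.integrable

lemma integrable_lap_schwartz (s : SchwartzMap E3 ℝ) :
    Integrable (fun x => lap (⇑s) x) volume := by
  have h : ∀ i : Fin 3, Integrable (fun x => pd i (pd i ⇑s) x) volume := by
    intro i
    rw [pd_schwartz i s, pd_schwartz i _]
    exact SchwartzMap.integrable _
  exact integrable_finset_sum _ (fun i _ => h i)

lemma integral_lap_schwartz (s : SchwartzMap E3 ℝ) : ∫ x, lap (⇑s) x = 0 := by
  have h : ∀ i : Fin 3, Integrable (fun x => pd i (pd i ⇑s) x) volume := by
    intro i
    rw [pd_schwartz i s, pd_schwartz i _]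
    exact SchwartzMap.integrable _
  rw [show (fun x => lap (⇑s) x) = fun x => ∑ i : Fin 3, pd i (pd i ⇑s) x from rfl,
    integral_finset_sum _ (fun i _ => h i)]
  refine Finset.sum_eq_zero fun i _ => ?_
  rw [pd_schwartz i s]
  exact integral_pd_schwartz i _

end Schwartz

section Radial

lemma inner_single (y : E3) (i : Fin 3) : ((innerSL ℝ) y) (EuclideanSpace.single i 1) = y i := by
  simp [EuclideanSpace.inner_single_right, real_inner_comm]

lemma lap_radial (q : ℝ → ℝ) (hq : ContDiff ℝ ∞ q) (x : E3) :
    lap (fun y => q (‖y‖^2)) x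
      = 4 * ‖x‖^2 * deriv (deriv q) (‖x‖^2) + 6 * deriv q (‖x‖^2) := by
  have hq' : ContDiff ℝ ∞ (deriv q) := (contDiff_infty_iff_deriv.mp hq).2
  have key : ∀ (f : ℝ → ℝ), Differentiable ℝ f → ∀ (i : Fin 3),
      pd i (fun y : E3 => f (‖y‖^2)) = fun y : E3 => deriv f (‖y‖^2) * (2 * y i) := by
    intro f hf i
    funext y
    have hN : HasFDerivAt (fun y : E3 => ‖y‖^2) (2 • (innerSL ℝ y)) y :=
      (hasStrictFDerivAt_norm_sq y).hasFDerivAt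
    have hf' : HasDerivAt f (deriv f (‖y‖^2)) (‖y‖^2) := (hf _).hasDerivAt
    have hcomp : HasFDerivAt (fun y : E3 => f (‖y‖^2))
        (deriv f (‖y‖^2) • 2 • (innerSL ℝ y)) y := hf'.comp_hasFDerivAt y hN
    rw [pd, hcomp.fderiv]
    simp only [ContinuousLinearMap.coe_smul', Pi.smul_apply, smul_eq_mul, inner_single]
    ring
  have key2 : ∀ (i : Fin 3),
      pd i (pd i (fun y : E3 => q (‖y‖^2))) x
        = deriv (deriv q) (‖x‖^2) * (2 * x i) * (2 * x i) + deriv q (‖x‖^2) * 2 := by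
    intro i
    rw [key q (hq.differentiable (by norm_num)) i]
    have hN : HasFDerivAt (fun y : E3 => ‖y‖^2) (2 • (innerSL ℝ x)) x :=
      (hasStrictFDerivAt_norm_sq x).hasFDerivAt
    have hu : HasDerivAt (deriv q) (deriv (deriv q) (‖x‖^2)) (‖x‖^2) :=
      ((hq'.differentiable (by norm_num)) _).hasDerivAt
    have h1 : HasFDerivAt (fun y : E3 => deriv q (‖y‖^2))
        ((deriv (deriv q) (‖x‖^2)) • (2 • (innerSL ℝ x))) x := by
        have := hu.comp_hasFDerivAt x hN; exact this
    have hcoord : HasFDerivAt (fun y : E3 => (2:ℝ) * y i)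
        ((2:ℝ) • (EuclideanSpace.proj i : E3 →L[ℝ] ℝ)) x := by
      have h := ((EuclideanSpace.proj (𝕜 := ℝ) i) :
          E3 →L[ℝ] ℝ).hasFDerivAt (x := x) |>.const_smul (2:ℝ)
      refine h.congr_of_eventuallyEq (Filter.Eventually.of_forall fun y => ?_)
      simp
    have hmul := h1.mul hcoord
    rw [pd, show (fun y : E3 => deriv q (‖y‖^2) * (2 * y i))
        = (fun y : E3 => deriv q (‖y‖^2)) * (fun y : E3 => 2 * y i) from rfl, hmul.fderiv]
    simp only [ContinuousLinearMap.add_apply, ContinuousLinearMap.coe_smul', Pi.smul_apply,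
      smul_eq_mul, inner_single]
    have hsingle : (EuclideanSpace.proj (𝕜 := ℝ) i : E3 →L[ℝ] ℝ) (EuclideanSpace.single i 1)
        = 1 := by simp [EuclideanSpace.single_apply]
    rw [hsingle]
    ring
  have hnorm : ∑ i : Fin 3, (x i)^2 = ‖x‖^2 := by
    rw [EuclideanSpace.norm_eq, Real.sq_sqrt (by positivity)]
    exact Finset.sum_congr rfl fun i _ => by simp [Real.norm_eq_abs, sq_abs]
  have hsum : ∑ i : Fin 3,
      (deriv (deriv q) (‖x‖^2) * (2 * x i) * (2 * x i) + deriv q (‖x‖^2) * 2)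
      = 4 * deriv (deriv q) (‖x‖^2) * (∑ i : Fin 3, (x i)^2) + 6 * deriv q (‖x‖^2) := by
    rw [Finset.sum_add_distrib, Finset.sum_const, Finset.card_univ, Finset.mul_sum]
    simp only [Fintype.card_fin, nsmul_eq_mul, Nat.cast_ofNat]
    rw [Finset.sum_congr rfl (fun (i : Fin 3) _ => show
      deriv (deriv q) (‖x‖^2) * (2 * x i) * (2 * x i)
        = 4 * deriv (deriv q) (‖x‖^2) * (x i)^2 by ring)]
    rw [← Finset.mul_sum]
    ring
  simp only [lap, key2]
  rw [hsum, hnorm]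
  ring

end Radial

section Qfacts

lemma q_zero {χ : ℝ → ℝ} {r₀ : ℝ} (hr₀ : 0 < r₀)
    (hχ0 : ∀ r ∈ Set.Icc 0 r₀, χ r = 0) :
    ∀ t < r₀^2, χ (Real.sqrt t) / Real.sqrt t = 0 := by
  intro t ht
  rcases le_or_gt t 0 with h | h
  · rw [Real.sqrt_eq_zero'.mpr h, hχ0 0 ⟨le_rfl, hr₀.le⟩, zero_div]
  · have h1 : Real.sqrt t < r₀ := (Real.sqrt_lt' hr₀).mpr ht
    rw [hχ0 _ ⟨Real.sqrt_nonneg t, h1.le⟩, zero_div]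

lemma q_one {χ : ℝ → ℝ} (hχ1 : ∀ r, 2 ≤ r → χ r = 1) :
    ∀ t, 4 < t → χ (Real.sqrt t) / Real.sqrt t = (Real.sqrt t)⁻¹ := by
  intro t ht
  rw [hχ1 _ (by rw [Real.le_sqrt (by norm_num) (by linarith)]; norm_num; linarith), one_div]

lemma hq_smooth {χ : ℝ → ℝ} {r₀ : ℝ} (hχ : ContDiff ℝ (⊤ : ℕ∞) χ) (hr₀ : 0 < r₀)
    (hχ0 : ∀ r ∈ Set.Icc 0 r₀, χ r = 0) :
    ContDiff ℝ ∞ (fun t => χ (Real.sqrt t) / Real.sqrt t) := by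
  rw [contDiff_iff_contDiffAt]
  intro t
  rcases lt_or_ge t (r₀^2) with h | h
  · refine ContDiffAt.congr_of_eventuallyEq (contDiffAt_const (c := (0:ℝ))) ?_
    exact Filter.eventually_of_mem (Iio_mem_nhds h) fun a ha => q_zero hr₀ hχ0 a ha
  · have ht : (0:ℝ) < t := lt_of_lt_of_le (by positivity) h
    exact (((hχ.of_le (by simp)).contDiffAt.comp t (contDiffAt_sqrt ht.ne')).div
      (contDiffAt_sqrt ht.ne') (Real.sqrt_ne_zero'.mpr ht))

end Qfacts

section Derivs

variable {q : ℝ → ℝ} {R : ℝ}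

lemma u_zero (hR : 0 < R) (hq0 : ∀ t < R, q t = 0) : ∀ t < R, deriv q t = 0 := by
  intro t ht
  have h : q =ᶠ[nhds t] (fun _ => (0:ℝ)) :=
    Filter.eventually_of_mem (Iio_mem_nhds ht) fun a ha => hq0 a ha
  rw [h.deriv_eq, deriv_const]

lemma u_four (hq1 : ∀ t, 4 < t → q t = (Real.sqrt t)⁻¹) :
    ∀ t, 4 < t → deriv q t = -1 / (2 * t * Real.sqrt t) := by
  intro t ht
  have ht0 : (0:ℝ) < t := by linarith
  have hst : Real.sqrt t ≠ 0 := Real.sqrt_ne_zero'.mpr ht0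
  have h : q =ᶠ[nhds t] (fun s => (Real.sqrt s)⁻¹) :=
    Filter.eventually_of_mem (Ioi_mem_nhds ht) fun a ha => hq1 a ha
  rw [h.deriv_eq]
  have hd : HasDerivAt (fun s => (Real.sqrt s)⁻¹)
      (-(1 / (2 * Real.sqrt t)) / (Real.sqrt t)^2) t :=
    (Real.hasDerivAt_sqrt ht0.ne').inv hst
  rw [hd.deriv, Real.sq_sqrt ht0.le]
  field_simp

lemma w_four (hq1 : ∀ t, 4 < t → q t = (Real.sqrt t)⁻¹) :
    ∀ t, 4 < t → deriv (deriv q) t = 3 / (4 * t^2 * Real.sqrt t) := by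
  intro t ht
  have ht0 : (0:ℝ) < t := by linarith
  have hst : Real.sqrt t ≠ 0 := Real.sqrt_ne_zero'.mpr ht0
  have h : deriv q =ᶠ[nhds t] (fun s => -1 / (2 * s * Real.sqrt s)) :=
    Filter.eventually_of_mem (Ioi_mem_nhds ht) fun a ha => u_four hq1 a ha
  rw [h.deriv_eq]
  have hprod : HasDerivAt (fun s : ℝ => 2 * s * Real.sqrt s)
      (2 * Real.sqrt t + 2 * t * (1 / (2 * Real.sqrt t))) t := by
    have h1 : HasDerivAt (fun s : ℝ => 2 * s) 2 t := by
      simpa using (hasDerivAt_id t).const_mul (2:ℝ)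
    have h2 := h1.mul (Real.hasDerivAt_sqrt ht0.ne')
    exact h2
  have hne : 2 * t * Real.sqrt t ≠ 0 := by positivity
  have hd := (hprod.inv hne).neg
  have hd2 : HasDerivAt (fun s : ℝ => -1 / (2 * s * Real.sqrt s))
      (-(-(2 * Real.sqrt t + 2 * t * (1 / (2 * Real.sqrt t))) / (2 * t * Real.sqrt t)^2)) t := by
    have hfun : (fun s : ℝ => -1 / (2 * s * Real.sqrt s)) = -(fun s : ℝ => 2 * s * Real.sqrt s)⁻¹ := by
      funext s; rw [Pi.neg_apply, Pi.inv_apply, neg_div, one_div]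
    rw [hfun]; exact hd
  rw [hd2.deriv]
  have hsq : Real.sqrt t * Real.sqrt t = t := Real.mul_self_sqrt ht0.le
  have e1 : 2 * Real.sqrt t + 2 * t * (1 / (2 * Real.sqrt t)) = 3 * Real.sqrt t := by
    field_simp
    linarith [hsq]
  rw [e1]
  field_simp
  nlinarith [hsq]

lemma oneD_integral (hq : ContDiff ℝ ∞ q) (hR : 0 < R)
    (hq0 : ∀ t < R, q t = 0) (hq1 : ∀ t, 4 < t → q t = (Real.sqrt t)⁻¹) :
    ∫ r in Ioi (0:ℝ), r^2 • (4 * r^2 * deriv (deriv q) (r^2) + 6 * deriv q (r^2)) = -1 := by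
  have hq' : ContDiff ℝ ∞ (deriv q) := (contDiff_infty_iff_deriv.mp hq).2
  have hq'' : ContDiff ℝ ∞ (deriv (deriv q)) := (contDiff_infty_iff_deriv.mp hq').2
  have u0 : ∀ t < R, deriv q t = 0 := u_zero hR hq0
  have w0 : ∀ t < R, deriv (deriv q) t = 0 := u_zero (q := deriv q) hR u0
  set f : ℝ → ℝ := fun r => 4 * r^2 * deriv (deriv q) (r^2) + 6 * deriv q (r^2) with hf
  have f_cont : Continuous f := by
    refine Continuous.add ?_ ?_
    · exact (continuous_const.mul (continuous_pow 2)).mul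
        (hq''.continuous.comp (continuous_pow 2))
    · exact continuous_const.mul (hq'.continuous.comp (continuous_pow 2))
  have h_cont : Continuous (fun r : ℝ => r^2 * f r) := (continuous_pow 2).mul f_cont
  have f_small : ∀ r : ℝ, r^2 < R → f r = 0 := by
    intro r hr
    rw [hf]; simp only
    rw [u0 _ hr, w0 _ hr]
    ring
  have f_big : ∀ r : ℝ, 2 < r → f r = 0 := by
    intro r hr
    have hr0 : (0:ℝ) < r := by linarith
    have h4 : (4:ℝ) < r^2 := by nlinarith
    rw [hf]; simp only
    rw [u_four hq1 _ h4, w_four hq1 _ h4, Real.sqrt_sq hr0.le]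
    field_simp
    ring
  have hF : ∀ r : ℝ, HasDerivAt (fun r : ℝ => 2 * r^3 * deriv q (r^2)) (r^2 * f r) r := by
    intro r
    have hu' : HasDerivAt (deriv q) (deriv (deriv q) (r^2)) (r^2) :=
      ((hq'.differentiable (by norm_num)) _).hasDerivAt
    have hsq : HasDerivAt (fun r : ℝ => r^2) (2 * r) r := by
      simpa using hasDerivAt_pow 2 r
    have hcomp : HasDerivAt (fun r : ℝ => deriv q (r^2))
        (deriv (deriv q) (r^2) * (2 * r)) r :=
      HasDerivAt.comp (x := r) (h := fun s : ℝ => s^2) hu' hsq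
    have hcube : HasDerivAt (fun r : ℝ => 2 * r^3) (2 * (3 * r^2)) r := by
      simpa using (hasDerivAt_pow 3 r).const_mul (2:ℝ)
    have := hcube.mul hcomp
    refine this.congr_deriv ?_
    rw [hf]; simp only
    ring
  set a : ℝ := Real.sqrt (min R 1) / 2 with ha
  have hmin : (0:ℝ) < min R 1 := lt_min hR one_pos
  have ha0 : 0 < a := by positivity
  have ha1 : a ≤ 1/2 := by
    rw [ha]
    have h2 : Real.sqrt (min R 1) ≤ Real.sqrt 1 := Real.sqrt_le_sqrt (min_le_right _ _)
    rw [Real.sqrt_one] at h2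
    linarith
  have ha_sq : ∀ r : ℝ, 0 < r → r ≤ a → r^2 < R := by
    intro r h0 hle
    have h1 : r^2 ≤ a^2 := by nlinarith
    have h2 : a^2 < min R 1 := by
      rw [ha, div_pow, Real.sq_sqrt hmin.le]
      nlinarith [hmin]
    exact lt_of_le_of_lt h1 (lt_of_lt_of_le h2 (min_le_left _ _))
  have ha3 : a ≤ 3 := by linarith
  have hsplit1 : Ioi (0:ℝ) = Ioc 0 3 ∪ Ioi 3 := (Ioc_union_Ioi_eq_Ioi (by norm_num)).symm
  have hsplit2 : Ioc (0:ℝ) 3 = Ioc 0 a ∪ Ioc a 3 := (Ioc_union_Ioc_eq_Ioc ha0.le ha3).symm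
  have hint_Ioc : ∀ b c : ℝ, IntegrableOn (fun r : ℝ => r^2 * f r) (Ioc b c) volume :=
    fun b c => h_cont.integrableOn_Ioc
  have hzero_big : ∀ r ∈ Ioi (3:ℝ), r^2 * f r = 0 := by
    intro r hr
    rw [f_big r (by simpa using lt_trans (by norm_num) hr), mul_zero]
  have hzero_small : ∀ r ∈ Ioc (0:ℝ) a, r^2 * f r = 0 := by
    intro r hr
    rw [f_small r (ha_sq r hr.1 hr.2), mul_zero]
  have hint_big : IntegrableOn (fun r : ℝ => r^2 * f r) (Ioi 3) volume := by
    refine IntegrableOn.congr_fun (integrableOn_zero) ?_ measurableSet_Ioi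
    intro r hr
    exact (hzero_big r hr).symm
  have e0 : ∫ r in Ioi (0:ℝ), r^2 • f r = ∫ r in Ioi (0:ℝ), r^2 * f r := by
    simp [smul_eq_mul]
  rw [e0, hsplit1, setIntegral_union (Ioc_disjoint_Ioi_same) measurableSet_Ioi
      (hint_Ioc 0 3) hint_big,
    setIntegral_eq_zero_of_forall_eq_zero hzero_big, add_zero,
    hsplit2, setIntegral_union (Ioc_disjoint_Ioc_of_le le_rfl) measurableSet_Ioc
      (hint_Ioc 0 a) (hint_Ioc a 3),
    setIntegral_eq_zero_of_forall_eq_zero hzero_small, zero_add,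
    ← intervalIntegral.integral_of_le ha3]
  rw [intervalIntegral.integral_eq_sub_of_hasDerivAt (fun t _ => hF t)
      (h_cont.intervalIntegrable a 3)]
  have hu9 : deriv q 9 = -1/54 := by
    have := u_four hq1 9 (by norm_num)
    rw [this, show Real.sqrt 9 = 3 by
      rw [show (9:ℝ) = 3^2 by norm_num, Real.sqrt_sq (by norm_num)]]
    norm_num
  have hFa : deriv q (a^2) = 0 := u0 _ (ha_sq a ha0 le_rfl)
  norm_num [hu9, hFa]

lemma volume_ball_E3 : (volume (Metric.ball (0:E3) 1)).toReal = 4/3 * π := by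
  rw [EuclideanSpace.volume_ball]
  simp only [Fintype.card_fin]
  have hΓ : Real.Gamma ((3:ℕ)/2 + 1) = 3/4 * Real.sqrt π := by
    rw [show ((3:ℕ):ℝ)/2 + 1 = (3/2 : ℝ) + 1 by norm_num,
      Real.Gamma_add_one (by norm_num),
      show (3/2 : ℝ) = 1/2 + 1 by norm_num,
      Real.Gamma_add_one (by norm_num), Real.Gamma_one_half_eq]
    ring
  rw [hΓ]
  have hs : Real.sqrt π ^ 3 = π * Real.sqrt π := by
    rw [pow_succ, Real.sq_sqrt pi_nonneg]
  have hsp : (0:ℝ) < Real.sqrt π := Real.sqrt_pos.mpr pi_pos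
  rw [ENNReal.ofReal_one, one_pow, one_mul, ENNReal.toReal_ofReal (by positivity), hs]
  field_simp

lemma f_norm_big {x : E3} (hx : 2 < ‖x‖)
    (hq1 : ∀ t, 4 < t → q t = (Real.sqrt t)⁻¹) :
    4 * ‖x‖^2 * deriv (deriv q) (‖x‖^2) + 6 * deriv q (‖x‖^2) = 0 := by
  have h0 : (0:ℝ) < ‖x‖ := by linarith
  have h4 : (4:ℝ) < ‖x‖^2 := by nlinarith
  rw [u_four hq1 _ h4, w_four hq1 _ h4, Real.sqrt_sq h0.le]
  field_simp
  ring

lemma integrable_f_norm (hq : ContDiff ℝ ∞ q)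
    (hq1 : ∀ t, 4 < t → q t = (Real.sqrt t)⁻¹) :
    Integrable (fun x : E3 =>
      4 * ‖x‖^2 * deriv (deriv q) (‖x‖^2) + 6 * deriv q (‖x‖^2)) volume := by
  have hq' : ContDiff ℝ ∞ (deriv q) := (contDiff_infty_iff_deriv.mp hq).2
  have hq'' : ContDiff ℝ ∞ (deriv (deriv q)) := (contDiff_infty_iff_deriv.mp hq').2
  have hcont : Continuous (fun x : E3 =>
      4 * ‖x‖^2 * deriv (deriv q) (‖x‖^2) + 6 * deriv q (‖x‖^2)) := by
    have hn : Continuous (fun x : E3 => ‖x‖^2) := (continuous_pow 2).comp continuous_norm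
    exact ((continuous_const.mul hn).mul (hq''.continuous.comp hn)).add
      (continuous_const.mul (hq'.continuous.comp hn))
  refine hcont.integrable_of_hasCompactSupport ?_
  refine HasCompactSupport.intro (isCompact_closedBall (0:E3) 3) ?_
  intro x hx
  have : 2 < ‖x‖ := by
    simp only [Metric.mem_closedBall, dist_zero_right, not_le] at hx
    linarith
  exact f_norm_big this hq1

lemma integral_f_norm (hq : ContDiff ℝ ∞ q) (hR : 0 < R)
    (hq0 : ∀ t < R, q t = 0) (hq1 : ∀ t, 4 < t → q t = (Real.sqrt t)⁻¹) :
    ∫ x : E3, (4 * ‖x‖^2 * deriv (deriv q) (‖x‖^2) + 6 * deriv q (‖x‖^2))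
      = -(4 * π) := by
  have h := MeasureTheory.integral_fun_norm_addHaar (volume : Measure E3)
    (fun r => 4 * r^2 * deriv (deriv q) (r^2) + 6 * deriv q (r^2))
  simp only [finrank_euclideanSpace_fin] at h
  rw [h, oneD_integral hq hR hq0 hq1, measureReal_def, volume_ball_E3]
  simp only [nsmul_eq_mul, smul_eq_mul]
  ring

end Derivs

/-- The order-ε Lyapunov–Schmidt identity: integrating the phase equation
with far-field correction c·P, where P(x) = χ(|x|)/|x|, determines
`c = (∫ g) / (4π(1+αγ))`. -/
theorem cgl_lyapunov_schmidt_coefficient (α γ : ℝ) (hγ : γ ≠ 0) (hαγ : 0 < 1 + α * γ)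
    (χ : ℝ → ℝ) (hχ : ContDiff ℝ (⊤ : ℕ∞) χ) (r₀ : ℝ) (hr₀ : 0 < r₀)
    (hχ0 : ∀ r ∈ Set.Icc 0 r₀, χ r = 0) (hχ1 : ∀ r, 2 ≤ r → χ r = 1)
    (s φ : SchwartzMap E3 ℝ) (g : E3 → ℝ) (hg : Integrable g volume) (c : ℝ)
    (heq : ∀ x, (α * γ + α / γ) * lap (⇑s) x + (1 + α * γ) * lap (⇑φ) x +
      c * (1 + α * γ) * lap (fun y : E3 => χ ‖y‖ / ‖y‖) x = -g x) :
    c = (∫ x, g x) / (4 * π * (1 + α * γ)) := by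
  set q : ℝ → ℝ := fun t => χ (Real.sqrt t) / Real.sqrt t with hqdef
  have hq : ContDiff ℝ ∞ q := hq_smooth hχ hr₀ hχ0
  have hq0 : ∀ t < r₀^2, q t = 0 := q_zero hr₀ hχ0
  have hq1 : ∀ t, 4 < t → q t = (Real.sqrt t)⁻¹ := q_one hχ1
  have hR : (0:ℝ) < r₀^2 := by positivity
  have hP : (fun y : E3 => χ ‖y‖ / ‖y‖) = fun y : E3 => q (‖y‖^2) := by
    funext y
    rw [hqdef]
    simp only
    rw [Real.sqrt_sq (norm_nonneg y)]
  have hlapP : ∀ x : E3, lap (fun y : E3 => χ ‖y‖ / ‖y‖) x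
      = 4 * ‖x‖^2 * deriv (deriv q) (‖x‖^2) + 6 * deriv q (‖x‖^2) := by
    intro x
    rw [hP]
    exact lap_radial q hq x
  set fP : E3 → ℝ := fun x => 4 * ‖x‖^2 * deriv (deriv q) (‖x‖^2) + 6 * deriv q (‖x‖^2)
    with hfP
  have hg_eq : ∀ x, g x = -((α * γ + α / γ) * lap (⇑s) x + (1 + α * γ) * lap (⇑φ) x
      + c * (1 + α * γ) * fP x) := by
    intro x
    have h := heq x
    rw [hlapP x] at h
    rw [hfP]
    simp only
    linarith
  have iA : Integrable (fun x => (α * γ + α / γ) * lap (⇑s) x) volume :=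
    (integrable_lap_schwartz s).const_mul _
  have iB : Integrable (fun x => (1 + α * γ) * lap (⇑φ) x) volume :=
    (integrable_lap_schwartz φ).const_mul _
  have iC : Integrable (fun x => c * (1 + α * γ) * fP x) volume :=
    (integrable_f_norm hq hq1).const_mul _
  have hInt : ∫ x, g x = 4 * π * (1 + α * γ) * c := by
    rw [show (fun x => g x) = fun x => -((α * γ + α / γ) * lap (⇑s) x
      + (1 + α * γ) * lap (⇑φ) x + c * (1 + α * γ) * fP x) from funext hg_eq]
    have h3 : ∫ a : E3, ((α * γ + α / γ) * lap (⇑s) a + (1 + α * γ) * lap (⇑φ) a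
        + c * (1 + α * γ) * fP a)
        = (∫ a : E3, ((α * γ + α / γ) * lap (⇑s) a + (1 + α * γ) * lap (⇑φ) a))
          + ∫ a : E3, c * (1 + α * γ) * fP a := integral_add (iA.add iB) iC
    have h4 : ∫ a : E3, ((α * γ + α / γ) * lap (⇑s) a + (1 + α * γ) * lap (⇑φ) a)
        = (∫ a : E3, (α * γ + α / γ) * lap (⇑s) a)
          + ∫ a : E3, (1 + α * γ) * lap (⇑φ) a := integral_add iA iB
    rw [integral_neg, h3, h4,
      integral_const_mul, integral_const_mul, integral_const_mul,
      integral_lap_schwartz s, integral_lap_schwartz φ]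
    rw [hfP, integral_f_norm hq hR hq0 hq1]
    ring
  have hne : (0:ℝ) < 4 * π * (1 + α * γ) := by
    have := pi_pos
    positivity
  rw [hInt]
  field_simp
end
end
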